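/- Let A be a clone over ℕ, B a right A-algebra, and Λ : B → B an abstract binding operation on x_1. For a variable y = x_i and c ∈ A ∪ B, write b[c/y] for b[x_1,…,x_{i−1}, c, x_{i+1}, …] (substituting c only at position i), say b is independent of y if b = b[y⁺/y] (where y⁺ = x_{i+1}), and let 𝛌x_i.b := Λ(b[s]) with s(j) = x_{j+1} for j ≠ i and s(i) = x_1. Then for variables y = x_i, z = x_j and b ∈ B: (1) if b is independent of y, then 𝛌z.b = 𝛌y.(b[y/z]); (2) if b is independent of y, then 𝛌y.b = Λ(b⁺); (3) if y ≠ z and a ∈ A is independent of z (as an element of the right A-algebra A), then (𝛌z.b)[a/y] = 𝛌z.(b[a/y]). -/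
import Mathlib


/-- A clone over the positive integers ℕ = {1,2,3,…}. -/
structure CloneN (A : Type*) where
  sub : A → (ℕ+ → A) → A
  x : ℕ+ → A
  sub_assoc : ∀ (a : A) (f g : ℕ+ → A), sub (sub a f) g = sub a (fun i => sub (f i) g)
  sub_x : ∀ a : A, sub a x = a
  x_sub : ∀ (i : ℕ+) (f : ℕ+ → A), sub (x i) f = f i

/-- A right algebra of a clone over ℕ. -/
structure RightAlgOn (A : Type*) (C : CloneN A) (B : Type*) where
  act : B → (ℕ+ → A) → B
  act_act : ∀ (b : B) (f g : ℕ+ → A), act (act b f) g = act b (fun i => C.sub (f i) g)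
  act_x : ∀ b : B, act b C.x = b

/-- A clone as a right algebra over itself. -/
def CloneN.selfAlg {A : Type*} (C : CloneN A) : RightAlgOn A C A :=
  ⟨C.sub, C.sub_assoc, C.sub_x⟩

/-- `b[c/x_i]`: substitute `c` only at position `i` (all other positions fixed). -/
def substAt {A B : Type*} (C : CloneN A) (R : RightAlgOn A C B) (i : ℕ+)
    (c : A) (b : B) : B :=
  R.act b (fun j => if j = i then c else C.x j)

/-- `b` is independent of the variable `x_i`: `b = b[x_{i+1}/x_i]`. -/
def IndependentOf {A B : Type*} (C : CloneN A) (R : RightAlgOn A C B) (i : ℕ+)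
    (b : B) : Prop :=
  b = substAt C R i (C.x (i + 1)) b

/-- `Λ : B → B` is an abstract binding operation on `x_1`. -/
def IsAbsBinding1 {A B : Type*} (C : CloneN A) (R : RightAlgOn A C B)
    (L : B → B) : Prop :=
  ∀ (b : B) (f : ℕ+ → A),
    R.act (L b) f = L (R.act b (fun j =>
      if j = 1 then C.x 1 else C.sub (f (j - 1)) (fun k => C.x (k + 1))))

/-- `𝛌x_i.b := Λ(b[s])` where `s(i) = x_1` and `s(j) = x_{j+1}` for `j ≠ i`. -/
def lamAt {A B : Type*} (C : CloneN A) (R : RightAlgOn A C B) (L : B → B)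
    (i : ℕ+) (b : B) : B :=
  L (R.act b (fun j => if j = i then C.x 1 else C.x (j + 1)))

private lemma pnat_succ_ne_one (k : ℕ+) : k + 1 ≠ 1 := by
  intro h
  have h2 : (k:ℕ) + 1 = 1 := by exact_mod_cast congrArg PNat.val h
  have := k.pos; omega

private lemma pnat_succ_sub_one (k : ℕ+) : k + 1 - 1 = k := by
  apply PNat.coe_injective
  rw [PNat.sub_coe]
  simp [PNat.lt_add_left]

private lemma pnat_succ_ne_self (k : ℕ+) : k + 1 ≠ k := by
  intro h
  have h2 : (k:ℕ) + 1 = k := by exact_mod_cast congrArg PNat.val h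
  omega

private lemma act_eq_of_indep {A B : Type*} (C : CloneN A) (R : RightAlgOn A C B)
    (i : ℕ+) {b : B} (h : IndependentOf C R i b) (f g : ℕ+ → A)
    (hfg : ∀ k, k ≠ i → f k = g k) : R.act b f = R.act b g := by
  have key : ∀ u : ℕ+ → A, R.act b u =
      R.act b (fun k => if k = i then u (i + 1) else u k) := by
    intro u
    conv_lhs => rw [h]
    unfold substAt IndependentOf at *
    rw [R.act_act]
    congr 1
    funext k
    by_cases hk : k = i <;> simp [hk, C.x_sub]
  rw [key f, key g]
  congr 1
  funext k
  by_cases hk : k = i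
  · simp [hk, hfg (i+1) (pnat_succ_ne_self i)]
  · simp [hk, hfg k hk]

/-- With `y = x_i`, `z = x_j`: (1) if `b` is independent of `y` then
`𝛌z.b = 𝛌y.(b[y/z])`; (2) if `b` is independent of `y` then `𝛌y.b = Λ(b⁺)`;
(3) if `y ≠ z` and `a ∈ A` is independent of `z` then
`(𝛌z.b)[a/y] = 𝛌z.(b[a/y])`. -/
theorem lamAt_substitution_rules {A B : Type*} (C : CloneN A)
    (R : RightAlgOn A C B) (L : B → B) (hL : IsAbsBinding1 C R L)
    (i j : ℕ+) (b : B) :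
    (IndependentOf C R i b →
      lamAt C R L j b = lamAt C R L i (substAt C R j (C.x i) b)) ∧
    (IndependentOf C R i b →
      lamAt C R L i b = L (R.act b (fun k => C.x (k + 1)))) ∧
    (∀ a : A, i ≠ j → IndependentOf C C.selfAlg j a →
      substAt C R i a (lamAt C R L j b) = lamAt C R L j (substAt C R i a b)) := by
  
  refine ⟨?_, ?_, ?_⟩
  · intro h
    unfold lamAt substAt
    rw [R.act_act]
    congr 1
    apply act_eq_of_indep C R i h
    intro k hk
    by_cases hkj : k = j <;> simp [hkj, hk, C.x_sub]
  · intro h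
    unfold lamAt
    congr 1
    apply act_eq_of_indep C R i h
    intro k hk
    simp [hk]
  · intro a hij ha
    unfold lamAt substAt
    rw [hL, R.act_act, R.act_act]
    congr 1
    congr 1
    funext k
    by_cases hki : k = i
    · subst hki
      have hkj : k ≠ j := hij
      simp only [hkj, if_false, C.x_sub, pnat_succ_ne_one k, if_false,
        pnat_succ_sub_one, if_pos rfl]
      exact (act_eq_of_indep C C.selfAlg j ha _ _
        (fun m hm => by simp [hm])).symm
    · by_cases hkj : k = j
      · subst hkj
        simp [hki, C.x_sub]
      · simp [hki, hkj, C.x_sub, pnat_succ_ne_one k, pnat_succ_sub_one]
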